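/- arXiv:2106.13261 — 2 statements merged into one kernel-verified Lean document; each statement's English description precedes it below -/
import Mathlib

section
/- The extended metric d on F(X) is complete: every Cauchy sequence in F(X) converges. -/
open Set

/-- An element of the generic ℝ-forest `F(X)` (simplified): a 1-Lipschitz function
from a compact subset of `ℝ≥0` containing `0` into a metric space `X`. -/
structure FPath (X : Type*) [MetricSpace X] where
  dom : Set ℝ
  compact' : IsCompact dom
  zero_mem : (0 : ℝ) ∈ dom
  subset_Ici : dom ⊆ Set.Ici 0
  toFun : ℝ → X
  lip : LipschitzOnWith 1 toFun dom

namespace FPath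

variable {X : Type*} [MetricSpace X]

/-- The length `|K| = sup π(K)`. -/
noncomputable def len (K : FPath X) : ℝ := sSup K.dom

/-- `K` and `K'` agree up to `r`: `r` is in both domains and the restrictions to `[0,r]` coincide. -/
def Agree (K K' : FPath X) (r : ℝ) : Prop :=
  r ∈ K.dom ∧ r ∈ K'.dom ∧ K.dom ∩ Set.Icc 0 r = K'.dom ∩ Set.Icc 0 r ∧
    Set.EqOn K.toFun K'.toFun (K.dom ∩ Set.Icc 0 r)

/-- The length `|K ⊓ K'|` of the longest common initial segment. -/
noncomputable def meetLen (K K' : FPath X) : ℝ := sSup {r | Agree K K' r}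

/-- `K` and `K'` are in the same finite distance component. -/
def FinDist (K K' : FPath X) : Prop := K.toFun 0 = K'.toFun 0

/-- The forest metric `d(K,K') = |K| + |K'| - 2|K ⊓ K'|` (meaningful for finite-distance pairs). -/
noncomputable def tdist (K K' : FPath X) : ℝ := K.len + K'.len - 2 * meetLen K K'

/-- `L ⊑ K`: `L` is an initial segment of `K`. -/
def InitSeg (L K : FPath X) : Prop :=
  L.dom = K.dom ∩ Set.Icc 0 L.len ∧ Set.EqOn L.toFun K.toFun L.dom

/-- `L` belongs to the interval `[K,K'] = {L : K⊓K' ⊑ L ⊑ K or K⊓K' ⊑ L ⊑ K'}`. -/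
def MemInterval (K K' L : FPath X) : Prop :=
  ∃ M : FPath X, M.len = meetLen K K' ∧ InitSeg M K ∧ InitSeg M K' ∧
    ((InitSeg M L ∧ InitSeg L K) ∨ (InitSeg M L ∧ InitSeg L K'))

/-- The endpoint value `K_X(|K|)`. -/
noncomputable def endpt (K : FPath X) : X := K.toFun K.len

/-- Distance from `A` to the interval `[K,K']`. -/
noncomputable def idist (A K K' : FPath X) : ℝ :=
  sInf {r | ∃ L : FPath X, MemInterval K K' L ∧ r = A.tdist L}

/-- The length of the longest common initial segment of a set of paths. -/
noncomputable def setMeetLen (S : Set (FPath X)) : ℝ :=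
  sSup {r | ∀ K ∈ S, ∀ K' ∈ S, Agree K K' r}

/-- The diameter of a set of paths. -/
noncomputable def setDiam (S : Set (FPath X)) : ℝ :=
  sSup {r | ∃ K ∈ S, ∃ K' ∈ S, r = K.tdist K'}

end FPath

/-!
For a Cauchy sequence `v`, the lengths `|v k|` converge to some `ℓ`, and the time `τ k` up to
which `v k` agrees with all later terms tends to `ℓ` as well. Truncating `v k` at `τ k` gives a
chain of initial segments; their union, completed at time `ℓ` by the limit of the endpoints
(which exists as `X` is complete), is a path `L` agreeing with `v k` up to `τ k`, so
`d(v k, L) ≤ |v k| + ℓ - 2 τ k → 0`.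
-/

open Filter Topology

theorem LipschitzOnWith.of_tendsto {α β ι : Type*} [PseudoMetricSpace α] [PseudoMetricSpace β]
    {l : Filter ι} [l.NeBot] {K : NNReal} {g : ι → α → β} {f : α → β} {s : Set α}
    (hg : ∀ i, LipschitzOnWith K (g i) s)
    (hf : ∀ x ∈ s, Tendsto (fun i => g i x) l (𝓝 (f x))) :
    LipschitzOnWith K f s :=
  LipschitzOnWith.of_dist_le_mul fun x hx y hy =>
    le_of_tendsto ((hf x hx).dist (hf y hy))
      (Eventually.of_forall fun i => (hg i).dist_le_mul x hx y hy)

namespace FPath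

variable {X : Type*} [MetricSpace X] {K K' K'' : FPath X} {r s t : ℝ}

theorem isClosed_dom (K : FPath X) : IsClosed K.dom := K.compact'.isClosed

theorem le_len (ht : t ∈ K.dom) : t ≤ K.len := le_csSup K.compact'.bddAbove ht

theorem len_mem_dom (K : FPath X) : K.len ∈ K.dom := K.compact'.sSup_mem ⟨0, K.zero_mem⟩

theorem nonneg_of_mem_dom (ht : t ∈ K.dom) : 0 ≤ t := K.subset_Ici ht

theorem len_nonneg (K : FPath X) : 0 ≤ K.len := le_len K.zero_mem

theorem dist_toFun_le (hs : s ∈ K.dom) (ht : t ∈ K.dom) :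
    dist (K.toFun s) (K.toFun t) ≤ |s - t| := by
  simpa [Real.dist_eq] using K.lip.dist_le_mul s hs t ht

theorem Agree.mem_dom_right (h : Agree K K' r) (ht : t ∈ K.dom) (htr : t ≤ r) : t ∈ K'.dom :=
  (h.2.2.1.subset ⟨ht, nonneg_of_mem_dom ht, htr⟩).1

theorem Agree.apply_eq (h : Agree K K' r) (ht : t ∈ K.dom) (htr : t ≤ r) :
    K.toFun t = K'.toFun t :=
  h.2.2.2 ⟨ht, nonneg_of_mem_dom ht, htr⟩

theorem Agree.symm (h : Agree K K' r) : Agree K' K r :=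
  ⟨h.2.1, h.1, h.2.2.1.symm, fun _ ht => (h.2.2.2 (h.2.2.1 ▸ ht)).symm⟩

theorem Agree.trans (h : Agree K K' r) (h' : Agree K' K'' r) : Agree K K'' r :=
  ⟨h.1, h'.2.1, h.2.2.1.trans h'.2.2.1,
    fun _ ht => (h.2.2.2 ht).trans (h'.2.2.2 (h.2.2.1 ▸ ht))⟩

theorem Agree.finDist (h : Agree K K' r) : FinDist K K' :=
  h.apply_eq K.zero_mem (nonneg_of_mem_dom h.1)

theorem agree_zero (h : FinDist K K') : Agree K K' 0 := by
  have hdom : ∀ K : FPath X, K.dom ∩ Icc 0 0 = {0} := fun K => by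
    rw [Icc_self, inter_eq_right, singleton_subset_iff]
    exact K.zero_mem
  refine ⟨K.zero_mem, K'.zero_mem, by rw [hdom, hdom], ?_⟩
  rw [hdom, eqOn_singleton]
  exact h

theorem agree_of_forall_lt (hK : r ∈ K.dom) (hK' : r ∈ K'.dom) (hr : K.toFun r = K'.toFun r)
    (h : ∀ t < r, ∃ r', Agree K K' r' ∧ t < r') : Agree K K' r := by
  have hmem : ∀ {A B : FPath X}, r ∈ B.dom → (∀ t < r, ∃ r', Agree A B r' ∧ t < r') →
      ∀ t ∈ A.dom ∩ Icc 0 r, t ∈ B.dom ∩ Icc 0 r := by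
    rintro A B hB h t ⟨ht, ht0, htr⟩
    rcases htr.eq_or_lt with rfl | htr
    · exact ⟨hB, ht0, le_rfl⟩
    · obtain ⟨r', hr', htr'⟩ := h t htr
      exact ⟨hr'.mem_dom_right ht htr'.le, ht0, htr.le⟩
  refine ⟨hK, hK', Subset.antisymm (hmem hK' h) (hmem hK fun t ht => ?_), ?_⟩
  · obtain ⟨r', hr', htr'⟩ := h t ht
    exact ⟨r', hr'.symm, htr'⟩
  · rintro t ⟨ht, -, htr⟩
    rcases htr.eq_or_lt with rfl | htr
    · exact hr
    · obtain ⟨r', hr', htr'⟩ := h t htr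
      exact hr'.apply_eq ht htr'.le

theorem Agree.mono (h : Agree K K' r) (hs : s ∈ K.dom) (hsr : s ≤ r) : Agree K K' s := by
  have hmem : ∀ {A B : FPath X}, Agree A B r → ∀ t ∈ A.dom ∩ Icc 0 s, t ∈ B.dom ∩ Icc 0 s :=
    fun hAB t ⟨ht, hts⟩ => ⟨hAB.mem_dom_right ht (hts.2.trans hsr), hts⟩
  exact ⟨hs, h.mem_dom_right hs hsr, Subset.antisymm (hmem h) (hmem h.symm),
    fun t ht => h.apply_eq ht.1 (ht.2.2.trans hsr)⟩

theorem bddAbove_setOf_agree (K K' : FPath X) : BddAbove {r | Agree K K' r} :=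
  K.compact'.bddAbove.mono fun _ hr => hr.1

theorem Agree.le_meetLen (h : Agree K K' r) : r ≤ meetLen K K' :=
  le_csSup (bddAbove_setOf_agree K K') h

/-- `K` and `K'` coincide on the agreement times, hence by continuity on their closure, which
contains the supremum. -/
theorem agree_meetLen (h : FinDist K K') : Agree K K' (meetLen K K') := by
  set S := {r | Agree K K' r}
  have hS : S.Nonempty := ⟨0, agree_zero h⟩
  have hcl : closure S ⊆ K.dom ∩ K'.dom :=
    closure_minimal (fun r hr => ⟨hr.1, hr.2.1⟩) (K.isClosed_dom.inter K'.isClosed_dom)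
  have hmem : meetLen K K' ∈ closure S := csSup_mem_closure hS (bddAbove_setOf_agree K K')
  have heq : EqOn K.toFun K'.toFun (closure S) :=
    EqOn.of_subset_closure (fun r hr => hr.apply_eq hr.1 le_rfl)
      (K.lip.continuousOn.mono fun _ ht => (hcl ht).1)
      (K'.lip.continuousOn.mono fun _ ht => (hcl ht).2) subset_closure subset_rfl
  exact agree_of_forall_lt (hcl hmem).1 (hcl hmem).2 (heq hmem) fun t ht =>
    exists_lt_of_lt_csSup hS ht

theorem meetLen_nonneg (h : FinDist K K') : 0 ≤ meetLen K K' := (agree_zero h).le_meetLen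

theorem meetLen_le_len_left (h : FinDist K K') : meetLen K K' ≤ K.len :=
  le_len (agree_meetLen h).1

theorem meetLen_le_len_right (h : FinDist K K') : meetLen K K' ≤ K'.len :=
  le_len (agree_meetLen h).2.1

theorem tdist_nonneg (h : FinDist K K') : 0 ≤ tdist K K' := by
  have := meetLen_le_len_left h
  have := meetLen_le_len_right h
  simp only [tdist]
  linarith

theorem abs_len_sub_len_le_tdist (h : FinDist K K') : |K.len - K'.len| ≤ tdist K K' := by
  have := meetLen_le_len_left h
  have := meetLen_le_len_right h
  simp only [tdist]
  rw [abs_le]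
  constructor <;> linarith

theorem Agree.tdist_le (h : Agree K K' r) : tdist K K' ≤ K.len + K'.len - 2 * r := by
  have := h.le_meetLen
  simp only [tdist]
  linarith

def truncate (K : FPath X) (hr : r ∈ K.dom) : FPath X where
  dom := K.dom ∩ Icc 0 r
  compact' := K.compact'.inter_right isClosed_Icc
  zero_mem := ⟨K.zero_mem, le_rfl, nonneg_of_mem_dom hr⟩
  subset_Ici := fun _ ht => ht.2.1
  toFun := K.toFun
  lip := K.lip.mono inter_subset_left

theorem len_truncate (hr : r ∈ K.dom) : (K.truncate hr).len = r :=
  IsGreatest.csSup_eq ⟨⟨hr, nonneg_of_mem_dom hr, le_rfl⟩, fun _ ht => ht.2.2⟩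

theorem agree_truncate (hr : r ∈ K.dom) : Agree K (K.truncate hr) r :=
  ⟨hr, ⟨hr, nonneg_of_mem_dom hr, le_rfl⟩, by simp only [truncate, inter_assoc, inter_self],
    fun _ _ => rfl⟩

theorem Agree.initSeg_truncate {r' : ℝ} (h : Agree K K' r) (hr' : r' ∈ K'.dom) (hrr' : r ≤ r') :
    InitSeg (K.truncate h.1) (K'.truncate hr') := by
  refine ⟨?_, h.2.2.2⟩
  rw [len_truncate]
  simp only [truncate, inter_assoc, Icc_inter_Icc, max_self, min_eq_right hrr']
  exact h.2.2.1

theorem InitSeg.dom_subset (h : InitSeg K K') : K.dom ⊆ K'.dom := fun _ ht => (h.1.subset ht).1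

theorem InitSeg.agree (h : InitSeg K K') : Agree K K' K.len := by
  have hdom : K.dom ∩ Icc 0 K.len = K.dom :=
    inter_eq_left.2 fun _ ht => ⟨nonneg_of_mem_dom ht, le_len ht⟩
  refine ⟨K.len_mem_dom, h.dom_subset K.len_mem_dom, ?_, ?_⟩
  · rw [hdom, h.1]
  · rw [hdom]
    exact h.2

section Chain

variable {w : ℕ → FPath X} {ℓ : ℝ}

theorem monotone_len_of_chain (hw : ∀ ⦃i j⦄, i ≤ j → InitSeg (w i) (w j)) :
    Monotone fun k => (w k).len :=
  fun _ _ hij => le_len ((hw hij).dom_subset (len_mem_dom _))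

theorem mem_dom_of_chain (hw : ∀ ⦃i j⦄, i ≤ j → InitSeg (w i) (w j)) {i j : ℕ}
    (ht : t ∈ (w i).dom) (htj : t ≤ (w j).len) : t ∈ (w j).dom := by
  rcases le_total i j with hij | hji
  · exact (hw hij).dom_subset ht
  · rw [(hw hji).1]
    exact ⟨ht, nonneg_of_mem_dom ht, htj⟩

theorem min_len_mem_dom_of_chain (hw : ∀ ⦃i j⦄, i ≤ j → InitSeg (w i) (w j))
    (hℓ : ∀ k, (w k).len ≤ ℓ) (ht : t ∈ insert ℓ (⋃ i, (w i).dom)) (j : ℕ) :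
    min t (w j).len ∈ (w j).dom := by
  rcases ht with rfl | ht
  · rw [min_eq_right (hℓ j)]
    exact len_mem_dom _
  obtain ⟨i, hi⟩ := mem_iUnion.1 ht
  rcases le_total t (w j).len with htj | hjt
  · rw [min_eq_left htj]
    exact mem_dom_of_chain hw hi htj
  · rw [min_eq_right hjt]
    exact len_mem_dom _

theorem insert_iUnion_dom_subset_Icc (hℓ : ∀ k, (w k).len ≤ ℓ) :
    insert ℓ (⋃ i, (w i).dom) ⊆ Icc 0 ℓ :=
  insert_subset_iff.2 ⟨⟨(len_nonneg _).trans (hℓ 0), le_rfl⟩,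
    iUnion_subset fun i _ ht => ⟨nonneg_of_mem_dom ht, (le_len ht).trans (hℓ i)⟩⟩

theorem isCompact_insert_iUnion_dom_of_chain (hw : ∀ ⦃i j⦄, i ≤ j → InitSeg (w i) (w j))
    (hℓ : Tendsto (fun k => (w k).len) atTop (𝓝 ℓ)) :
    IsCompact (insert ℓ (⋃ i, (w i).dom)) := by
  have hD := insert_iUnion_dom_subset_Icc ((monotone_len_of_chain hw).ge_of_tendsto hℓ)
  refine Metric.isCompact_of_isClosed_isBounded ?_ ((Metric.isBounded_Icc 0 ℓ).subset hD)
  rw [← closure_subset_iff_isClosed, insert_eq, closure_union, closure_singleton, ← insert_eq]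
  refine insert_subset_iff.2 ⟨mem_insert _ _, fun t ht => ?_⟩
  rcases (closure_minimal ((subset_insert _ _).trans hD) isClosed_Icc ht).2.eq_or_lt
    with rfl | htℓ
  · exact mem_insert _ _
  obtain ⟨k, hk⟩ := (hℓ.eventually (lt_mem_nhds htℓ)).exists
  have hsub : Iio (w k).len ∩ ⋃ i, (w i).dom ⊆ (w k).dom := fun s ⟨hs, hsU⟩ => by
    obtain ⟨i, hi⟩ := mem_iUnion.1 hsU
    exact mem_dom_of_chain hw hi (le_of_lt hs)
  have htk : t ∈ (w k).dom := (w k).isClosed_dom.closure_subset_iff.2 hsub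
    (isOpen_Iio.inter_closure ⟨hk, ht⟩)
  exact mem_insert_of_mem _ (mem_iUnion.2 ⟨k, htk⟩)

theorem cauchySeq_endpt_of_chain (hw : ∀ ⦃i j⦄, i ≤ j → InitSeg (w i) (w j))
    (hℓ : Tendsto (fun k => (w k).len) atTop (𝓝 ℓ)) : CauchySeq fun k => endpt (w k) := by
  have hmono := monotone_len_of_chain hw
  refine cauchySeq_of_le_tendsto_0' (fun k => ℓ - (w k).len) (fun i j hij => ?_)
    (by simpa using hℓ.const_sub ℓ)
  have hi := (hw hij).dom_subset (len_mem_dom (w i))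
  calc dist (endpt (w i)) (endpt (w j))
      = dist ((w j).toFun (w i).len) ((w j).toFun (w j).len) := by
        rw [endpt, endpt, (hw hij).2 (len_mem_dom _)]
    _ ≤ |(w i).len - (w j).len| := dist_toFun_le hi (len_mem_dom _)
    _ ≤ ℓ - (w i).len := by
        rw [abs_sub_comm, abs_of_nonneg (sub_nonneg.2 (hmono hij))]
        linarith [hmono.ge_of_tendsto hℓ j]

/-- The limit path is the pointwise limit of `t ↦ w j (min t |w j|)`: eventually constant
below `ℓ`, and the sequence of endpoints at `ℓ`. -/
theorem exists_initSeg_of_chain [CompleteSpace X] (hw : ∀ ⦃i j⦄, i ≤ j → InitSeg (w i) (w j))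
    (hℓ : Tendsto (fun k => (w k).len) atTop (𝓝 ℓ)) :
    ∃ L : FPath X, L.len = ℓ ∧ ∀ k, InitSeg (w k) L := by
  set D := insert ℓ (⋃ i, (w i).dom)
  have hle : ∀ k, (w k).len ≤ ℓ := (monotone_len_of_chain hw).ge_of_tendsto hℓ
  have hD := insert_iUnion_dom_subset_Icc hle
  set g : ℕ → ℝ → X := fun j t => (w j).toFun (min t (w j).len)
  have hg_eq : ∀ {i t}, t ∈ (w i).dom → ∀ᶠ j in atTop, (w i).toFun t = g j t :=
    fun {i t} ht => eventually_atTop.2 ⟨i, fun j hij => by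
      simp only [g, min_eq_left ((le_len ht).trans (monotone_len_of_chain hw hij))]
      exact (hw hij).2 ht⟩
  have hg : ∀ t ∈ D, ∃ y, Tendsto (g · t) atTop (𝓝 y) := by
    rintro t (rfl | ht)
    · refine cauchySeq_tendsto_of_complete ?_
      simpa only [g, endpt, min_eq_right (hle _)] using cauchySeq_endpt_of_chain hw hℓ
    · obtain ⟨i, hi⟩ := mem_iUnion.1 ht
      exact ⟨_, tendsto_const_nhds.congr' (hg_eq hi)⟩
  have : Nonempty X := ⟨(w 0).toFun 0⟩
  set f : ℝ → X := fun t => limUnder atTop (g · t)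
  have hf : ∀ t ∈ D, Tendsto (g · t) atTop (𝓝 (f t)) :=
    fun t ht => tendsto_nhds_limUnder (hg t ht)
  have hg_lip : ∀ j, LipschitzOnWith 1 (g j) D := fun j => by
    have := (w j).lip.comp (LipschitzWith.id.min_const _).lipschitzOnWith
      fun t ht => min_len_mem_dom_of_chain hw hle ht j
    rwa [mul_one] at this
  have hlip : LipschitzOnWith 1 f D := LipschitzOnWith.of_tendsto hg_lip hf
  refine ⟨⟨D, isCompact_insert_iUnion_dom_of_chain hw hℓ,
    mem_insert_of_mem _ (mem_iUnion.2 ⟨0, (w 0).zero_mem⟩), fun t ht => (hD ht).1, f, hlip⟩,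
    IsGreatest.csSup_eq ⟨mem_insert _ _, fun t ht => (hD ht).2⟩, fun k => ⟨?_, fun t ht => ?_⟩⟩
  · refine Subset.antisymm (fun t ht => ⟨mem_insert_of_mem _ (mem_iUnion.2 ⟨k, ht⟩),
      nonneg_of_mem_dom ht, le_len ht⟩) ?_
    rintro t ⟨rfl | ht, -, htk⟩
    · rw [le_antisymm htk (hle k)]
      exact len_mem_dom _
    · obtain ⟨i, hi⟩ := mem_iUnion.1 ht
      exact mem_dom_of_chain hw hi htk
  · exact tendsto_nhds_unique (tendsto_const_nhds.congr' (hg_eq ht))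
      (hf t (mem_insert_of_mem _ (mem_iUnion.2 ⟨k, ht⟩)))

end Chain

section Cauchy

variable {v : ℕ → FPath X} {ℓ : ℝ} {k j : ℕ}

noncomputable def tailMeet (v : ℕ → FPath X) (k : ℕ) : ℝ :=
  sInf ((fun j => meetLen (v k) (v j)) '' Ici k)

theorem bddBelow_tailMeet (hFin : ∀ i j, FinDist (v i) (v j)) (k : ℕ) :
    BddBelow ((fun j => meetLen (v k) (v j)) '' Ici k) :=
  ⟨0, forall_mem_image.2 fun j _ => meetLen_nonneg (hFin k j)⟩

theorem tailMeet_le_meetLen (hFin : ∀ i j, FinDist (v i) (v j)) (hkj : k ≤ j) :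
    tailMeet v k ≤ meetLen (v k) (v j) :=
  csInf_le (bddBelow_tailMeet hFin k) (mem_image_of_mem _ hkj)

theorem le_tailMeet (h : ∀ j ≥ k, r ≤ meetLen (v k) (v j)) : r ≤ tailMeet v k :=
  le_csInf (nonempty_Ici.image _) (forall_mem_image.2 h)

theorem tailMeet_mem_dom (hFin : ∀ i j, FinDist (v i) (v j)) (k : ℕ) :
    tailMeet v k ∈ (v k).dom :=
  (v k).isClosed_dom.closure_subset_iff.2
    (image_subset_iff.2 fun j _ => (agree_meetLen (hFin k j)).1)
    (csInf_mem_closure (nonempty_Ici.image _) (bddBelow_tailMeet hFin k))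

theorem agree_tailMeet (hFin : ∀ i j, FinDist (v i) (v j)) (hkj : k ≤ j) :
    Agree (v k) (v j) (tailMeet v k) :=
  (agree_meetLen (hFin k j)).mono (tailMeet_mem_dom hFin k) (tailMeet_le_meetLen hFin hkj)

theorem monotone_tailMeet (hFin : ∀ i j, FinDist (v i) (v j)) : Monotone (tailMeet v) :=
  fun _ _ hkk' => le_tailMeet fun _ hj =>
    ((agree_tailMeet hFin hkk').symm.trans (agree_tailMeet hFin (hkk'.trans hj))).le_meetLen

theorem tendsto_tailMeet (hFin : ∀ i j, FinDist (v i) (v j))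
    (hv : ∀ ε > 0, ∃ N, ∀ m ≥ N, ∀ n ≥ N, tdist (v m) (v n) < ε)
    (hℓ : Tendsto (fun k => (v k).len) atTop (𝓝 ℓ)) : Tendsto (tailMeet v) atTop (𝓝 ℓ) := by
  refine tendsto_order.2 ⟨fun a ha => ?_, fun b hb => ?_⟩
  · obtain ⟨N, hN⟩ := hv ((ℓ - a) / 2) (by linarith)
    obtain ⟨N', hN'⟩ := eventually_atTop.1 (hℓ.eventually (lt_mem_nhds (by linarith :
      (ℓ + a) / 2 < ℓ)))
    filter_upwards [eventually_ge_atTop (max N N')] with k hk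
    -- `meetLen (v k) (v j) = (|v k| + |v j| - d(v k, v j)) / 2 > ((ℓ + a) - (ℓ - a) / 2) / 2`
    refine (by linarith : a < (ℓ + 3 * a) / 4).trans_le (le_tailMeet fun j hj => ?_)
    have hd := hN k (le_of_max_le_left hk) j (le_of_max_le_left (hk.trans hj))
    have hlk := hN' k (le_of_max_le_right hk)
    have hlj := hN' j (le_of_max_le_right (hk.trans hj))
    simp only [tdist] at hd
    linarith
  · filter_upwards [hℓ.eventually (gt_mem_nhds hb)] with k hk
    exact ((tailMeet_le_meetLen hFin le_rfl).trans (meetLen_le_len_left (hFin k k))).trans_lt hk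

theorem exists_tendsto_tdist_of_cauchy [CompleteSpace X] (hFin : ∀ i j, FinDist (v i) (v j))
    (hv : ∀ ε > 0, ∃ N, ∀ m ≥ N, ∀ n ≥ N, tdist (v m) (v n) < ε) :
    ∃ L : FPath X, (∀ k, FinDist (v k) L) ∧ Tendsto (fun k => tdist (v k) L) atTop (𝓝 0) := by
  have hlen : CauchySeq fun k => (v k).len := Metric.cauchySeq_iff.2 fun ε hε =>
    (hv ε hε).imp fun N hN m hm n hn => by
      rw [Real.dist_eq]
      exact (abs_len_sub_len_le_tdist (hFin m n)).trans_lt (hN m hm n hn)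
  obtain ⟨ℓ, hℓ⟩ := cauchySeq_tendsto_of_complete hlen
  have hτ := tendsto_tailMeet hFin hv hℓ
  obtain ⟨L, hL, hvL⟩ := exists_initSeg_of_chain
    (w := fun k => (v k).truncate (tailMeet_mem_dom hFin k))
    (fun i j hij => (agree_tailMeet hFin hij).initSeg_truncate (tailMeet_mem_dom hFin j)
      (monotone_tailMeet hFin hij))
    (by simpa only [len_truncate] using hτ)
  have hagree : ∀ k, Agree (v k) L (tailMeet v k) := fun k => by
    have := (hvL k).agree
    rw [len_truncate] at this
    exact (agree_truncate _).trans this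
  refine ⟨L, fun k => (hagree k).finDist, squeeze_zero
    (fun k => tdist_nonneg (hagree k).finDist) (fun k => (hagree k).tdist_le) ?_⟩
  convert (hℓ.add_const L.len).sub (hτ.const_mul 2) using 2
  rw [hL]
  ring

end Cauchy

end FPath

/-- the extended metric `d` on `F(X)` is complete: every Cauchy
sequence (eventually pairwise finite-distance and `d`-Cauchy) converges. -/
theorem fpath_complete {X : Type*} [MetricSpace X] [CompleteSpace X]
    (u : ℕ → FPath X)
    (hCauchy : ∀ ε : ℝ, 0 < ε → ∃ N : ℕ, ∀ m ≥ N, ∀ n ≥ N,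
      (u m).FinDist (u n) ∧ (u m).tdist (u n) < ε) :
    ∃ L : FPath X, ∀ ε : ℝ, 0 < ε → ∃ N : ℕ, ∀ n ≥ N,
      (u n).FinDist L ∧ (u n).tdist L < ε := by
  obtain ⟨N₀, hN₀⟩ := hCauchy 1 one_pos
  obtain ⟨L, hFinL, hL⟩ := FPath.exists_tendsto_tdist_of_cauchy (v := fun k => u (k + N₀))
    (fun i j => (hN₀ _ (by omega) _ (by omega)).1)
    (fun ε hε => (hCauchy ε hε).imp fun N hN m hm n hn => (hN _ (by omega) _ (by omega)).2)
  refine ⟨L, fun ε hε => ?_⟩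
  obtain ⟨N, hN⟩ := eventually_atTop.1 (hL.eventually (gt_mem_nhds hε))
  refine ⟨N + N₀, fun n hn => ?_⟩
  obtain ⟨k, rfl⟩ : ∃ k, n = k + N₀ := ⟨n - N₀, by omega⟩
  exact ⟨hFinL k, hN k (by omega)⟩
end

section
/- Any compact topometric space (X, τ, ∂) with an open metric has finite diameter: sup{∂(x,y) : x,y ∈ X} < ∞. -/
/-!
Closed balls are `t`-closed by lower semicontinuity, and the diagonal is the intersection of the
closed sets `{∂ ≤ 1/(n+1)}`, so `t` is compact Hausdorff and hence Baire. Some closed ball around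
a point therefore has nonempty `t`-interior `U`. Since the metric is open, the thickenings of `U`
form an increasing open cover of `X`; by compactness one of them is all of `X`, and it is bounded.
-/

open Set Topology Metric

/-- `(X, t, dist)` is a topometric space: `t` is a topology on the metric space `X`,
the metric topology refines `t`, and the metric is lower semi-continuous w.r.t. `t × t`. -/
def IsTopometric {X : Type*} [MetricSpace X] (t : TopologicalSpace X) : Prop :=
  ((inferInstance : TopologicalSpace X) ≤ t) ∧
    ∀ ε : ℝ, 0 < ε →
      IsClosed[@instTopologicalSpaceProd X X t t] {p : X × X | dist p.1 p.2 ≤ ε}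

/-- The metric is open w.r.t. `t`: for every `t`-open `U` and `ε > 0`,
`U^{<ε} = {z : ∂(z,U) < ε}` is `t`-open. -/
def HasOpenMetric {X : Type*} [MetricSpace X] (t : TopologicalSpace X) : Prop :=
  ∀ U : Set X, IsOpen[t] U → ∀ ε : ℝ, 0 < ε →
    IsOpen[t] {z : X | ∃ u ∈ U, dist z u < ε}

section

variable {X : Type*} [MetricSpace X] {t : TopologicalSpace X}

namespace IsTopometric

theorem isClosed_closedBall (htm : IsTopometric t) (x : X) {r : ℝ} (hr : 0 < r) :
    IsClosed[t] (closedBall x r) :=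
  let := t
  (htm.2 r hr).preimage (continuous_id.prodMk continuous_const)

theorem t2Space (htm : IsTopometric t) : @T2Space X t := by
  let := t
  have hdiag : diagonal X = ⋂ n : ℕ, {p : X × X | dist p.1 p.2 ≤ 1 / (n + 1)} := by
    ext ⟨x, y⟩
    simp only [mem_diagonal_iff, mem_iInter, mem_ofPred_eq]
    refine ⟨fun hxy n => by rw [hxy, dist_self]; positivity, fun h => ?_⟩
    refine dist_le_zero.mp (le_of_forall_gt_imp_ge_of_dense fun ε hε => ?_)
    obtain ⟨n, hn⟩ := exists_nat_one_div_lt hε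
    exact (h n).trans hn.le
  rw [t2_iff_isClosed_diagonal, hdiag]
  exact isClosed_iInter fun n => htm.2 _ (by positivity)

theorem exists_nonempty_interior_closedBall (htm : IsTopometric t) [@CompactSpace X t] (x : X) :
    ∃ n : ℕ, (@interior X t (closedBall x (n + 1))).Nonempty := by
  let := t
  have := htm.t2Space
  have : Nonempty X := ⟨x⟩
  refine nonempty_interior_of_iUnion_of_closed
    (fun n : ℕ => htm.isClosed_closedBall x n.cast_add_one_pos)
    (eq_univ_of_forall fun y => mem_iUnion.2 ?_)
  obtain ⟨n, hn⟩ := exists_nat_ge (dist y x)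
  exact ⟨n, hn.trans (le_add_of_nonneg_right zero_le_one)⟩

end IsTopometric

theorem HasOpenMetric.isOpen_thickening (hopen : HasOpenMetric t) {U : Set X} (hU : IsOpen[t] U)
    {ε : ℝ} (hε : 0 < ε) : IsOpen[t] (thickening ε U) := by
  simpa only [← mem_thickening_iff, ofPred_mem_eq] using hopen U hU ε hε

theorem HasOpenMetric.isBounded_univ (hopen : HasOpenMetric t) [@CompactSpace X t] {U : Set X}
    (hU : IsOpen[t] U) (hne : U.Nonempty) (hb : Bornology.IsBounded U) :
    Bornology.IsBounded (univ : Set X) := by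
  let := t
  have hcover : univ ⊆ ⋃ n : ℕ, thickening (n + 1) U := fun z _ => by
    obtain ⟨u, hu⟩ := hne
    obtain ⟨n, hn⟩ := exists_nat_gt (dist z u)
    exact mem_iUnion.2 ⟨n, mem_thickening_iff.2 ⟨u, hu, hn.trans (lt_add_one _)⟩⟩
  obtain ⟨n, hn⟩ := isCompact_univ.elim_directed_cover _
    (fun n : ℕ => hopen.isOpen_thickening hU n.cast_add_one_pos) hcover
    (Monotone.directed_le fun m n hmn => thickening_mono (by gcongr) U)
  exact hb.thickening.subset hn

end

/-- a compact topometric space with an open metric has finite diameter. -/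
theorem topometric_finite_diam {X : Type*} [MetricSpace X] (t : TopologicalSpace X)
    (hcomp : @CompactSpace X t) (htm : IsTopometric t) (hopen : HasOpenMetric t) :
    ∃ D : ℝ, ∀ x y : X, dist x y ≤ D := by
  suffices Bornology.IsBounded (univ : Set X) by
    obtain ⟨D, hD⟩ := isBounded_iff.1 this
    exact ⟨D, fun x y => hD (mem_univ x) (mem_univ y)⟩
  rcases isEmpty_or_nonempty X with hX | ⟨⟨x⟩⟩
  · exact univ_eq_empty_iff.2 hX ▸ Bornology.isBounded_empty
  obtain ⟨n, hn⟩ := htm.exists_nonempty_interior_closedBall x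
  exact hopen.isBounded_univ (@isOpen_interior X t _) hn
    (isBounded_closedBall.subset (@interior_subset X t _))
end
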